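/- Let E ⊂ ℝ be a compact set with Lebesgue measure m(E), and let h(z) = (1/2)∫_E dt/(z - t) and f(z) = (e^{h(z)} - 1)/(e^{h(z)} + 1) for z outside E. Then lim_{z→∞} z·f(z) = m(E)/4, i.e., f'(∞) = m(E)/4. -/

import Mathlib

/-!
Writing `w ↦ (e^w - 1)/(e^w + 1)` as `φ`, we have `f = φ ∘ h` with `φ 0 = 0` and `φ' 0 = 1/2`.
Since `z / (z - t) → 1` and stays bounded for `t` in the bounded set `E`, dominated convergence gives
`z h(z) → m(E)/2`; in particular `h(z) → 0`, so `z φ(h z) = φ'(0) · z h(z) + o(z h(z)) → m(E)/4`.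
-/

open MeasureTheory Filter Bornology Topology Asymptotics

lemma norm_mul_inv_sub_sub_one_le {z t : ℂ} {R : ℝ} (ht : ‖t‖ ≤ R) (hz : R < ‖z‖) :
    ‖z * (z - t)⁻¹ - 1‖ ≤ R / (‖z‖ - R) := by
  have hzt : ‖z‖ - R ≤ ‖z - t‖ := by linarith [norm_sub_norm_le z t]
  have hne : z - t ≠ 0 := norm_pos_iff.mp (by linarith)
  calc ‖z * (z - t)⁻¹ - 1‖ = ‖t‖ / ‖z - t‖ := by
        rw [← norm_div]; congr 1; field_simp; ring
    _ ≤ R / (‖z‖ - R) := div_le_div₀ ((norm_nonneg t).trans ht) ht (by linarith) hzt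

lemma tendsto_mul_inv_sub_cobounded (t : ℂ) :
    Tendsto (fun z : ℂ => z * (z - t)⁻¹) (cobounded ℂ) (𝓝 1) := by
  rw [← tendsto_sub_nhds_zero_iff]
  have hbound : Tendsto (fun z : ℂ => ‖t‖ / (‖z‖ - ‖t‖)) (cobounded ℂ) (𝓝 0) :=
    tendsto_const_nhds.div_atTop
      (tendsto_atTop_add_const_right _ _ tendsto_norm_cobounded_atTop)
  refine squeeze_zero_norm' ?_ hbound
  filter_upwards [tendsto_norm_cobounded_atTop.eventually_gt_atTop ‖t‖] with z hz
  exact norm_mul_inv_sub_sub_one_le le_rfl hz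

theorem tendsto_mul_setIntegral_inv_sub_cobounded {μ : Measure ℝ} [IsFiniteMeasureOnCompacts μ]
    {E : Set ℝ} (hE : IsCompact E) :
    Tendsto (fun z : ℂ => z * ∫ t in E, (z - t)⁻¹ ∂μ) (cobounded ℂ) (𝓝 (μ.real E)) := by
  obtain ⟨R, hR⟩ := hE.isBounded.subset_closedBall 0
  have : (cobounded ℂ).IsCountablyGenerated := comap_norm_atTop (E := ℂ) ▸ inferInstance
  have hlim : Tendsto (fun z : ℂ => ∫ t in E, z * (z - t)⁻¹ ∂μ) (cobounded ℂ)
      (𝓝 (∫ _ in E, (1 : ℂ) ∂μ)) := by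
    refine tendsto_integral_filter_of_dominated_convergence (fun _ => 2)
      (Eventually.of_forall fun z => by fun_prop) ?_
      (integrableOn_const hE.measure_lt_top.ne)
      (Eventually.of_forall fun t => tendsto_mul_inv_sub_cobounded t)
    filter_upwards [tendsto_norm_cobounded_atTop.eventually_ge_atTop (2 * R + 1)] with z hz
    refine ae_restrict_of_forall_mem hE.measurableSet fun t ht => ?_
    have htR : ‖(t : ℂ)‖ ≤ R := by simpa using hR ht
    have hR0 : 0 ≤ R := (norm_nonneg (t : ℂ)).trans htR
    have hclose := norm_mul_inv_sub_sub_one_le (z := z) htR (by linarith)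
    have hsmall : R / (‖z‖ - R) ≤ 1 := (div_le_one (by linarith)).mpr (by linarith)
    calc ‖z * (z - t)⁻¹‖ ≤ ‖z * (z - t)⁻¹ - 1‖ + ‖(1 : ℂ)‖ := norm_le_norm_sub_add _ _
      _ ≤ 2 := by rw [norm_one]; linarith
  simpa [integral_const_mul, measureReal_def] using hlim

theorem tendsto_mul_comp_of_hasDerivAt {𝕜 α : Type*} [NontriviallyNormedField 𝕜]
    {l : Filter α} {φ : 𝕜 → 𝕜} {d c : 𝕜} {w g : α → 𝕜} (hφ : HasDerivAt φ d 0)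
    (hφ0 : φ 0 = 0) (hg : Tendsto g l (𝓝 0)) (hwg : Tendsto (fun x => w x * g x) l (𝓝 c)) :
    Tendsto (fun x => w x * φ (g x)) l (𝓝 (d * c)) := by
  have hlin : (fun x => φ (g x) - g x * d) =o[l] g := by
    have := (hasDerivAt_iff_isLittleO.mp hφ).comp_tendsto hg
    simpa [Function.comp_def, hφ0, mul_comm] using this
  have herr : Tendsto (fun x => w x * (φ (g x) - g x * d)) l (𝓝 0) := by
    have := (isBigO_refl w l).mul_isLittleO hlin
    exact (isLittleO_one_iff 𝕜).mp (this.trans_isBigO (hwg.isBigO_one 𝕜))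
  have := herr.add (hwg.const_mul d)
  rw [zero_add] at this
  exact this.congr fun x => by ring

theorem tendsto_zero_of_tendsto_mul_cobounded {𝕜 : Type*} [NormedDivisionRing 𝕜] {g : 𝕜 → 𝕜}
    {c : 𝕜} (h : Tendsto (fun z => z * g z) (cobounded 𝕜) (𝓝 c)) :
    Tendsto g (cobounded 𝕜) (𝓝 0) := by
  have := tendsto_inv₀_cobounded.mul h
  rw [zero_mul] at this
  refine this.congr' ?_
  filter_upwards [eventually_ne_cobounded (0 : 𝕜)] with z hz
  rw [inv_mul_cancel_left₀ hz]

theorem hasDerivAt_exp_sub_one_div_exp_add_one :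
    HasDerivAt (fun w : ℂ => (Complex.exp w - 1) / (Complex.exp w + 1)) (1 / 2) 0 := by
  refine (((Complex.hasDerivAt_exp 0).sub_const 1).div
    ((Complex.hasDerivAt_exp 0).add_const 1) (by norm_num)).congr_deriv ?_
  norm_num

theorem pommerenke_deriv_at_infty (E : Set ℝ) (hE : IsCompact E)
    (h f : ℂ → ℂ)
    (hh : ∀ z, h z = (1 / 2 : ℂ) * ∫ t in E, (z - (t : ℂ))⁻¹)
    (hf : ∀ z, f z = (Complex.exp (h z) - 1) / (Complex.exp (h z) + 1)) :
    Tendsto (fun z => z * f z) (cobounded ℂ)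
      (nhds (((volume E).toReal / 4 : ℝ) : ℂ)) := by
  have hzh : Tendsto (fun z => z * h z) (cobounded ℂ) (𝓝 (1 / 2 * (volume E).toReal)) := by
    refine ((tendsto_mul_setIntegral_inv_sub_cobounded hE).const_mul (1 / 2 : ℂ)).congr
      fun z => ?_
    rw [hh]
    ring
  have hlim := tendsto_mul_comp_of_hasDerivAt hasDerivAt_exp_sub_one_div_exp_add_one
    (by simp) (tendsto_zero_of_tendsto_mul_cobounded hzh) hzh
  convert hlim using 2 with z
  · rw [hf]
  · push_cast
    ring
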